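/- arXiv:2310.14231 — 3 statements merged into one kernel-verified Lean document; each statement's English description precedes it below -/
import Mathlib

section
/- Let g be a finite-dimensional real Lie algebra and Ω a symplectic 2-cocycle on g. Then the bracket on g* defined by [[α, β]] := ad*_{Ω⁻¹ β} α − ad*_{Ω⁻¹ α} β is bilinear, skew-symmetric, and satisfies the Jacobi identity, making g* into a Lie algebra. -/
/-- The coadjoint action of `x : g` on `γ ∈ g*`: `(ad*_x γ)(z) = γ ⁅x, z⁆`. -/
noncomputable def coad {g : Type*} [LieRing g] [LieAlgebra ℝ g]
    (x : g) (γ : Module.Dual ℝ g) : Module.Dual ℝ g :=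
  γ ∘ₗ (LieAlgebra.ad ℝ g x)

/-- `Ω` (a bijective linear map `g → g*`) is a symplectic 2-cocycle on `g`:
it is skew-symmetric and satisfies the 2-cocycle identity. -/
def IsSymplecticCocycle {g : Type*} [LieRing g] [LieAlgebra ℝ g]
    (Ω : g ≃ₗ[ℝ] Module.Dual ℝ g) : Prop :=
  (∀ x y : g, Ω x y = - Ω y x) ∧
  (∀ x y z : g, Ω ⁅x, y⁆ z + Ω ⁅y, z⁆ x + Ω ⁅z, x⁆ y = 0)

/-- The bracket `[[α, β]] := ad*_{Ω⁻¹ β} α − ad*_{Ω⁻¹ α} β` on `g*`. -/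
noncomputable def cobracket {g : Type*} [LieRing g] [LieAlgebra ℝ g]
    (Ω : g ≃ₗ[ℝ] Module.Dual ℝ g) (α β : Module.Dual ℝ g) : Module.Dual ℝ g :=
  coad (Ω.symm β) α - coad (Ω.symm α) β


lemma cobracket_eq {g : Type*} [LieRing g] [LieAlgebra ℝ g]
    (Ω : g ≃ₗ[ℝ] Module.Dual ℝ g) (hΩ : IsSymplecticCocycle Ω)
    (α β : Module.Dual ℝ g) :
    cobracket Ω α β = Ω ⁅Ω.symm α, Ω.symm β⁆ := by
  obtain ⟨hskew, hcoc⟩ := hΩ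
  set x := Ω.symm α with hx
  set y := Ω.symm β with hy
  have hα : α = Ω x := (Ω.apply_symm_apply α).symm
  have hβ : β = Ω y := (Ω.apply_symm_apply β).symm
  ext z
  have h := hcoc x y z
  have h1 : Ω ⁅y, z⁆ x = - Ω x ⁅y, z⁆ := hskew _ _
  have h2 : Ω ⁅z, x⁆ y = - Ω y ⁅z, x⁆ := hskew _ _
  simp only [cobracket, coad, LinearMap.sub_apply, LinearMap.coe_comp,
    Function.comp_apply, LieAlgebra.ad_apply, hα, hβ]
  have h3 : Ω y ⁅z, x⁆ = - Ω y ⁅x, z⁆ := by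
    rw [← lie_skew x z, map_neg, neg_neg]
  simp only [LinearEquiv.symm_apply_apply]
  rw [h1, h2, h3] at h
  linarith

/-- For a symplectic 2-cocycle `Ω` on a finite-dimensional real Lie algebra `g`,
the bracket `[[α, β]] := ad*_{Ω⁻¹ β} α − ad*_{Ω⁻¹ α} β` on `g*` is bilinear,
skew-symmetric, and satisfies the Jacobi identity, making `g*` a Lie algebra. -/
theorem cobracket_isLieBracket (g : Type*) [LieRing g] [LieAlgebra ℝ g]
    [FiniteDimensional ℝ g] (Ω : g ≃ₗ[ℝ] Module.Dual ℝ g)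
    (hΩ : IsSymplecticCocycle Ω) :
    (∀ (c : ℝ) (α β γ : Module.Dual ℝ g),
        cobracket Ω (c • α + β) γ = c • cobracket Ω α γ + cobracket Ω β γ) ∧
    (∀ (c : ℝ) (α β γ : Module.Dual ℝ g),
        cobracket Ω α (c • β + γ) = c • cobracket Ω α β + cobracket Ω α γ) ∧
    (∀ α β : Module.Dual ℝ g, cobracket Ω α β = - cobracket Ω β α) ∧
    (∀ α β γ : Module.Dual ℝ g,
        cobracket Ω α (cobracket Ω β γ) + cobracket Ω β (cobracket Ω γ α)
          + cobracket Ω γ (cobracket Ω α β) = 0) := by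
  refine ⟨?_, ?_, ?_, ?_⟩
  · intro c α β γ
    simp only [cobracket_eq Ω hΩ, map_add, map_smul, add_lie, smul_lie]
  · intro c α β γ
    simp only [cobracket_eq Ω hΩ, map_add, map_smul, lie_add, lie_smul]
  · intro α β
    rw [cobracket_eq Ω hΩ, cobracket_eq Ω hΩ, ← map_neg, lie_skew]
  · intro α β γ
    simp only [cobracket_eq Ω hΩ, LinearEquiv.symm_apply_apply]
    rw [← map_add, ← map_add]
    rw [lie_jacobi]
    simp
end

section
/- Let g be a finite-dimensional real Lie algebra and Ω a symplectic 2-cocycle on g. Then the anchor map ρ := Ω⁻¹ : g* → g satisfies ρ([[α, β]]) = [ρ(α), ρ(β)] for all α, β ∈ g*, where [[α, β]] := ad*_{Ω⁻¹ β} α − ad*_{Ω⁻¹ α} β; that is, Ω⁻¹ is a Lie algebra isomorphism from (g*, [[·,·]]) onto g. -/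
/-- For a symplectic 2-cocycle `Ω` on a finite-dimensional real Lie algebra `g`,
the anchor `ρ := Ω⁻¹ : g* → g` is a Lie algebra morphism:
`ρ([[α, β]]) = [ρ(α), ρ(β)]` for all `α, β ∈ g*`. -/
theorem anchor_lieHom (g : Type*) [LieRing g] [LieAlgebra ℝ g]
    [FiniteDimensional ℝ g] (Ω : g ≃ₗ[ℝ] Module.Dual ℝ g)
    (hΩ : IsSymplecticCocycle Ω) :
    ∀ α β : Module.Dual ℝ g,
      Ω.symm (cobracket Ω α β) = ⁅Ω.symm α, Ω.symm β⁆ := by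
  obtain ⟨hskew, hcoc⟩ := hΩ
  intro α β
  set x := Ω.symm α with hx
  set y := Ω.symm β with hy
  have : cobracket Ω α β = Ω ⁅x, y⁆ := by
    apply LinearMap.ext
    intro z
    have h1 := hcoc x y z
    have h2 : Ω ⁅y, z⁆ x = - Ω x ⁅y, z⁆ := hskew _ _
    have h3 : Ω ⁅z, x⁆ y = Ω y ⁅x, z⁆ := by
      rw [hskew, ← lie_skew x z, map_neg]
    have hα : α = Ω x := by rw [hx, Ω.apply_symm_apply]
    have hβ : β = Ω y := by rw [hy, Ω.apply_symm_apply]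
    simp only [cobracket, coad, LinearMap.sub_apply, LinearMap.comp_apply,
      LieAlgebra.ad_apply, hα, hβ, Ω.symm_apply_apply]
    rw [h2, h3] at h1
    linarith
  rw [this, Ω.symm_apply_apply]
end

section
/- Let g be a real Lie algebra and D : g → g a bijective derivation of g. Then the deformed bracket [x, y]_R := [D⁻¹ x, y] + [x, D⁻¹ y] (i.e. the R-bracket with R = D⁻¹) is bilinear, skew-symmetric, and satisfies the Jacobi identity, defining a second Lie algebra structure on g. -/
/-- The deformed (R-) bracket `[x, y]_R := [D⁻¹ x, y] + [x, D⁻¹ y]` associated with an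
invertible linear map `D : g → g`, with `R = D⁻¹`. -/
noncomputable def rBracket {g : Type*} [LieRing g] [LieAlgebra ℝ g]
    (D : g ≃ₗ[ℝ] g) (x y : g) : g :=
  ⁅D.symm x, y⁆ + ⁅x, D.symm y⁆

/-- For a bijective derivation `D` of a real Lie algebra `g`, the deformed bracket
`[x, y]_R := [D⁻¹ x, y] + [x, D⁻¹ y]` is bilinear, skew-symmetric and satisfies the
Jacobi identity, giving a second Lie algebra structure on `g`. -/
theorem rBracket_isLieBracket (g : Type*) [LieRing g] [LieAlgebra ℝ g]
    (D : g ≃ₗ[ℝ] g) (hD : ∀ x y : g, D ⁅x, y⁆ = ⁅D x, y⁆ + ⁅x, D y⁆) :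
    (∀ (c : ℝ) (x y z : g),
        rBracket D (c • x + y) z = c • rBracket D x z + rBracket D y z) ∧
    (∀ (c : ℝ) (x y z : g),
        rBracket D x (c • y + z) = c • rBracket D x y + rBracket D x z) ∧
    (∀ x y : g, rBracket D x y = - rBracket D y x) ∧
    (∀ x y z : g,
        rBracket D x (rBracket D y z) + rBracket D y (rBracket D z x)
          + rBracket D z (rBracket D x y) = 0) := by
  have key : ∀ x y : g, rBracket D x y = D ⁅D.symm x, D.symm y⁆ := by
    intro x y
    rw [rBracket, hD, D.apply_symm_apply, D.apply_symm_apply, add_comm]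
  refine ⟨?_, ?_, ?_, ?_⟩
  · intro c x y z
    simp [key, lie_smul, smul_lie, add_lie, lie_add]
  · intro c x y z
    simp [key, lie_smul, smul_lie, add_lie, lie_add]
  · intro x y
    rw [key, key, ← map_neg, ← lie_skew]
  · intro x y z
    simp only [key, D.symm_apply_apply, ← map_add]
    rw [lie_jacobi, map_zero]
end
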